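/- Let y_i be a positive argument place. If a morphism term of ℳ₀ in which the i-th argument of S belongs to {f, 1_C} reduces by a sequence of D reductions to a term in which this argument is 1_A, then the sequence includes a reduction step in whose redex all the argument places from Ψ_{y_i} are occupied by f, and in whose contractum all the argument places from Ψ_{y_i} are occupied by 1_A and all the argument places from Ψ′_{y_i} are occupied by f. -/
import Mathlib


open CategoryTheory

universe u v

namespace GDin

/-! ### Graphs in the sense of the paper -/

/-- Vertices of a graph with `m` left-hand argument places, `n` right-hand argument
places and `g` auxiliary `G`-vertices. -/
abbrev Vtx (m n g : ℕ) := (Fin m ⊕ Fin n) ⊕ Fin g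

/-- The "same component" relation generated by a set of edges. -/
def Conn {V : Type*} (E : V → V → Prop) : V → V → Prop := Relation.EqvGen E

/-- A graph in the sense of the paper.  The sign (variance) functions `sL` (for the
left-hand argument places `x₁,…,x_m`) and `sR` (for the right-hand argument places
`y₁,…,y_n`) are parameters; `true` means positive (covariant), `false` negative.
The structure also carries the number `k` of connected components together with the
component classifier `π`. -/
structure GGraph (m n g : ℕ) (sL : Fin m → Bool) (sR : Fin n → Bool) : Type where
  edge : Vtx m n g → Vtx m n g → Prop
  symm : ∀ u v, edge u v → edge v u
  /-- condition 1: every vertex belongs to some edge -/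
  covered : ∀ v, ∃ w, edge v w
  /-- condition 2: an edge joins two left-hand argument places iff they have opposite
  signs and lie in the same component -/
  condX : ∀ i j : Fin m, edge (.inl (.inl i)) (.inl (.inl j)) ↔
    (sL i = !sL j ∧ Conn edge (.inl (.inl i)) (.inl (.inl j)))
  /-- condition 3 -/
  condY : ∀ i j : Fin n, edge (.inl (.inr i)) (.inl (.inr j)) ↔
    (sR i = !sR j ∧ Conn edge (.inl (.inr i)) (.inl (.inr j)))
  /-- condition 4 -/
  condXY : ∀ (i : Fin m) (j : Fin n), edge (.inl (.inl i)) (.inl (.inr j)) ↔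
    (sL i = sR j ∧ Conn edge (.inl (.inl i)) (.inl (.inr j)))
  /-- condition 5, first half: if a component contains an edge between two argument
  places then it contains no `G`-vertex -/
  condG₁ : ∀ v : Vtx m n g,
    (∃ u w : Fin m ⊕ Fin n, Conn edge (.inl u) v ∧ edge (.inl u) (.inl w)) →
      ∀ a : Fin g, ¬ Conn edge (.inr a) v
  /-- condition 5, second half: otherwise the component contains exactly one
  `G`-vertex -/
  condG₂ : ∀ v : Vtx m n g,
    (¬ ∃ u w : Fin m ⊕ Fin n, Conn edge (.inl u) v ∧ edge (.inl u) (.inl w)) →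
      ∃! a : Fin g, Conn edge (.inr a) v
  /-- condition 5: every other vertex of such a component is joined to the
  `G`-vertex by an edge -/
  condG₃ : ∀ (a : Fin g) (u : Fin m ⊕ Fin n),
    Conn edge (.inl u) (.inr a) → edge (.inl u) (.inr a)
  /-- the number of components -/
  k : ℕ
  /-- the component classifier -/
  π : Vtx m n g → Fin k
  π_surj : Function.Surjective π
  π_eq : ∀ u v, π u = π v ↔ Conn edge u v

namespace GGraph

variable {m n g : ℕ} {sL : Fin m → Bool} {sR : Fin n → Bool}

/-- component of the `i`-th left-hand argument place -/
def πL (Γ : GGraph m n g sL sR) (i : Fin m) : Fin Γ.k := Γ.π (.inl (.inl i))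

/-- component of the `j`-th right-hand argument place -/
def πR (Γ : GGraph m n g sL sR) (j : Fin n) : Fin Γ.k := Γ.π (.inl (.inr j))

end GGraph

/-! ### Variance-indexed categories and g-dinaturality -/

/-- `B` or `Bᵒᵖ` according to a variance. -/
def VarCat (B : Type u) [Category.{v} B] : Bool → Type u
  | true => B
  | false => Bᵒᵖ

instance (B : Type u) [Category.{v} B] : ∀ b, Category.{v} (VarCat B b)
  | true => (inferInstance : Category B)
  | false => (inferInstance : Category Bᵒᵖ)

variable {B : Type u} [Category.{v} B]

/-- The object of `B` or `Bᵒᵖ` with `P` at a positive argument place and `N` at a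
negative one. -/
def pairObj : (b : Bool) → B → B → VarCat B b
  | true, P, _ => P
  | false, _, N => Opposite.op N

/-- The morphism with `u` at a positive argument place and `v` (contravariantly) at a
negative one. -/
def pairHom : (b : Bool) → {P P' N N' : B} → (P ⟶ P') → (N' ⟶ N) →
    (pairObj b P N ⟶ pairObj b P' N')
  | true, _, _, _, _, u, _ => u
  | false, _, _, _, _, _, v => v.op

variable {ι : Type} {k : ℕ}

/-- The tuple of objects `⟨u,v⟩` with `u` in all positive and `v` in all negative
argument places. -/
@[reducible] def tupObj (s : ι → Bool) (P N : B) : ∀ i, VarCat B (s i) :=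
  fun i => pairObj (s i) P N

/-- The corresponding tuple of morphisms. -/
def tupHom (s : ι → Bool) {P P' N N' : B} (u : P ⟶ P') (v : N' ⟶ N) :
    (tupObj s P N ⟶ tupObj s P' N') :=
  fun i => pairHom (s i) u v

/-- The diagonal-like tuple of objects determined by an assignment of objects to
the components of a graph. -/
@[reducible] def diagObj (s : ι → Bool) (pl : ι → Fin k) (A : Fin k → B) :
    ∀ i, VarCat B (s i) :=
  fun i => pairObj (s i) (A (pl i)) (A (pl i))

/-- The tuple of objects obtained from the component assignment `A` by replacing the
value of component `c` by `P` at positive and `N` at negative argument places. -/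
def hexObj (s : ι → Bool) (pl : ι → Fin k) (c : Fin k) (A : Fin k → B) (P N : B) :
    ∀ i, VarCat B (s i) :=
  fun i => if pl i = c then pairObj (s i) P N else pairObj (s i) (A (pl i)) (A (pl i))

/-- The corresponding tuple of morphisms (identities outside component `c`). -/
def hexHom (s : ι → Bool) (pl : ι → Fin k) (c : Fin k) (A : Fin k → B)
    {P P' N N' : B} (u : P ⟶ P') (v : N' ⟶ N) :
    (hexObj s pl c A P N ⟶ hexObj s pl c A P' N') :=
  fun i => by
    unfold hexObj
    by_cases h : pl i = c
    · simp only [if_pos h]; exact pairHom (s i) u v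
    · simp only [if_neg h]; exact 𝟙 _

/-- update of a component assignment -/
def updF {γ : Type*} (A : Fin k → γ) (c : Fin k) (X : γ) : Fin k → γ :=
  fun j => if j = c then X else A j

theorem diag_upd (s : ι → Bool) (pl : ι → Fin k) (c : Fin k) (A : Fin k → B) (X : B) :
    diagObj s pl (updF A c X) = hexObj s pl c A X X := by
  funext i
  unfold diagObj hexObj updF
  by_cases h : pl i = c <;> simp [h]

/-- g-dinaturality of a transformation with respect to a graph: in every component
and for every morphism `f : P ⟶ Q` (all other components being kept fixed), the
g-dinaturality hexagon commutes. -/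
def IsGDin {m n gΓ : ℕ} {sL : Fin m → Bool} {sR : Fin n → Bool}
    (Γ : GGraph m n gΓ sL sR)
    (T : (∀ i : Fin m, VarCat B (sL i)) ⥤ B)
    (S : (∀ j : Fin n, VarCat B (sR j)) ⥤ B)
    (α : ∀ A : Fin Γ.k → B, T.obj (diagObj sL Γ.πL A) ⟶ S.obj (diagObj sR Γ.πR A)) :
    Prop :=
  ∀ (c : Fin Γ.k) (A : Fin Γ.k → B) (P Q : B) (f : P ⟶ Q),
    T.map (hexHom sL Γ.πL c A f (𝟙 Q)) ≫
      eqToHom (congrArg T.obj (diag_upd sL Γ.πL c A Q).symm) ≫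
      α (updF A c Q) ≫
      eqToHom (congrArg S.obj (diag_upd sR Γ.πR c A Q)) ≫
      S.map (hexHom sR Γ.πR c A (𝟙 Q) f)
    = T.map (hexHom sL Γ.πL c A (𝟙 P) f) ≫
      eqToHom (congrArg T.obj (diag_upd sL Γ.πL c A P).symm) ≫
      α (updF A c P) ≫
      eqToHom (congrArg S.obj (diag_upd sR Γ.πR c A P)) ≫
      S.map (hexHom sR Γ.πR c A f (𝟙 P))

/-- The g-dinaturality hexagon for a transformation whose graph has a single
component (so that only the signs of the argument places matter). -/
def SingleHex {ιx ιz : Type} (sx : ιx → Bool) (sz : ιz → Bool)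
    (F : (∀ i : ιx, VarCat B (sx i)) ⥤ B) (H : (∀ l : ιz, VarCat B (sz l)) ⥤ B)
    (φ : ∀ A : B, F.obj (tupObj sx A A) ⟶ H.obj (tupObj sz A A)) : Prop :=
  ∀ (P Q : B) (f : P ⟶ Q),
    F.map (tupHom sx f (𝟙 Q)) ≫ φ Q ≫ H.map (tupHom sz (𝟙 Q) f)
    = F.map (tupHom sx (𝟙 P) f) ≫ φ P ≫ H.map (tupHom sz f (𝟙 P))


/-! ### The set `ℳ₀` of `CF`-normal terms of `ℳ`, and `D` reduction -/

/-- the possible arguments `1_A`, `1_C`, `f` of `T`, `S`, `R` in a term of `ℳ₀` -/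
inductive MArg : Type
  | idA : MArg
  | idC : MArg
  | ff : MArg
deriving DecidableEq

section MZsec
variable {m n p gΦ gΨ : ℕ} {sx : Fin m → Bool} {sy : Fin n → Bool} {sz : Fin p → Bool}

/-- A term of `ℳ₀`, i.e. a `CF`-normal form `[R(t⃗)] β(Y⃗) [S(h⃗)] α(X⃗) [T(g⃗)]` of a
term of `ℳ`, of type `T⟨A,C⟩ → R⟨C,A⟩`.  Such a term is completely determined by the
tuples `X⃗` and `Y⃗` of objects from `{A, C}` (here `true` codes `C` and `false`
codes `A`), subject to the typing (compatibility) condition below; the argument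
vectors `g⃗`, `h⃗`, `t⃗` are then recovered by `MZ.g`, `MZ.h`, `MZ.t`. -/
structure MZ (Φ : GGraph m n gΦ sx sy) (Ψ : GGraph n p gΨ sy sz) : Type where
  Xv : Fin Φ.k → Bool
  Yv : Fin Ψ.k → Bool
  compat : ∀ j : Fin n,
    (sy j = true → ¬(Xv (Φ.πR j) = true ∧ Yv (Ψ.πL j) = false)) ∧
    (sy j = false → ¬(Yv (Ψ.πL j) = true ∧ Xv (Φ.πR j) = false))

variable {Φ : GGraph m n gΦ sx sy} {Ψ : GGraph n p gΨ sy sz}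

/-- the argument of `T` at the place `x_i` -/
def MZ.g (z : MZ Φ Ψ) (i : Fin m) : MArg :=
  if sx i then (if z.Xv (Φ.πL i) then .ff else .idA)
  else (if z.Xv (Φ.πL i) then .idC else .ff)

/-- the argument of `S` at the place `y_j` -/
def MZ.h (z : MZ Φ Ψ) (j : Fin n) : MArg :=
  if sy j then
    (if z.Xv (Φ.πR j) then .idC else if z.Yv (Ψ.πL j) then .ff else .idA)
  else
    (if z.Yv (Ψ.πL j) then .idC else if z.Xv (Φ.πR j) then .ff else .idA)

/-- the argument of `R` at the place `z_l` -/
def MZ.t (z : MZ Φ Ψ) (l : Fin p) : MArg :=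
  if sz l then (if z.Yv (Ψ.πR l) then .idC else .ff)
  else (if z.Yv (Ψ.πR l) then .ff else .idA)

/-- the argument occupying a (left- or right-hand) argument place of `Φ` -/
def MZ.occPhi (z : MZ Φ Ψ) : Fin m ⊕ Fin n → MArg := Sum.elim z.g z.h

/-- the argument occupying a (left- or right-hand) argument place of `Ψ` -/
def MZ.occPsi (z : MZ Φ Ψ) : Fin n ⊕ Fin p → MArg := Sum.elim z.h z.t

/-- One step of `D` reduction on the set `ℳ₀`, applied to the entire term: an
`(α_i)`-step replaces the `i`-th argument `C` of `α` by `A`, provided all the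
arguments `g_j` with `x_j ∈ Φ_i⁺` and all the arguments `h_j` with `y_j ∈ Φ_i⁻`
are `f`; the affected arguments are updated accordingly (which, the terms of `ℳ₀`
being determined by `X⃗` and `Y⃗`, is captured by updating `X⃗`).  `(β_i)`-steps are
analogous. -/
inductive DStep : MZ Φ Ψ → MZ Φ Ψ → Prop
  | alphaStep (z z' : MZ Φ Ψ) (i : Fin Φ.k) :
      z.Xv i = true →
      (∀ j : Fin m, sx j = true → Φ.πL j = i → z.g j = .ff) →
      (∀ j : Fin n, sy j = false → Φ.πR j = i → z.h j = .ff) →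
      z'.Xv = Function.update z.Xv i false →
      z'.Yv = z.Yv →
      DStep z z'
  | betaStep (z z' : MZ Φ Ψ) (i : Fin Ψ.k) :
      z.Yv i = true →
      (∀ j : Fin n, sy j = true → Ψ.πL j = i → z.h j = .ff) →
      (∀ l : Fin p, sz l = false → Ψ.πR l = i → z.t l = .ff) →
      z'.Yv = Function.update z.Yv i false →
      z'.Xv = z.Xv →
      DStep z z'

/-- a term of `ℳ₀` is in `D` normal form -/
def DNormal (z : MZ Φ Ψ) : Prop := ¬ ∃ z', DStep z z'

end MZsec

private lemma exists_flip (P : ℕ → Bool) : ∀ q, P 0 = true → P q = false →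
    ∃ t, t < q ∧ P t = true ∧ P (t + 1) = false := by
  intro q
  induction q with
  | zero => intro h0 hq; rw [h0] at hq; exact absurd hq (by simp)
  | succ q ih =>
    intro h0 hq
    by_cases hPq : P q = true
    · exact ⟨q, Nat.lt_succ_self q, hPq, hq⟩
    · obtain ⟨t, ht, h1, h2⟩ := ih h0 (by simpa using hPq)
      exact ⟨t, ht.trans (Nat.lt_succ_self q), h1, h2⟩

/-- Lemma 2.8 of the paper.  Let `y_i` be a positive argument
place.  If a morphism term of `ℳ₀` in which the `i`-th argument of `S` belongs to
`{f, 1_C}` reduces by a sequence of `D` reductions to a term in which this argument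
is `1_A`, then the sequence includes a reduction step in whose redex all the
argument places from `Ψ_{y_i}` (the argument places in the `Ψ`-component of `y_i`
not joined to `y_i` by an edge of `Ψ`, including `y_i` itself) are occupied by `f`,
and in whose contractum all the argument places from `Ψ_{y_i}` are occupied by `1_A`
and all the argument places from `Ψ′_{y_i}` (those joined to `y_i` by an edge of
`Ψ`) are occupied by `f`. -/
theorem D_seq_posY_to_idA
    {m n p gΦ gΨ : ℕ} {sx : Fin m → Bool} {sy : Fin n → Bool} {sz : Fin p → Bool}
    {Φ : GGraph m n gΦ sx sy} {Ψ : GGraph n p gΨ sy sz}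
    (i : Fin n) (hpos : sy i = true)
    (q : ℕ) (seq : ℕ → MZ Φ Ψ) (hstep : ∀ t, t < q → DStep (seq t) (seq (t + 1)))
    (h0 : (seq 0).h i = .ff ∨ (seq 0).h i = .idC) (hq : (seq q).h i = .idA) :
    ∃ t, t < q ∧
      (∀ v : Fin n ⊕ Fin p, Ψ.π (.inl v) = Ψ.π (.inl (.inl i)) →
        ¬ Ψ.edge (.inl (.inl i)) (.inl v) → (seq t).occPsi v = .ff) ∧
      (∀ v : Fin n ⊕ Fin p, Ψ.π (.inl v) = Ψ.π (.inl (.inl i)) →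
        ¬ Ψ.edge (.inl (.inl i)) (.inl v) → (seq (t + 1)).occPsi v = .idA) ∧
      (∀ v : Fin n ⊕ Fin p, Ψ.edge (.inl (.inl i)) (.inl v) →
        (seq (t + 1)).occPsi v = .ff) := by
  classical
  set c := Ψ.πL i with hc
  -- Yv c is true at 0
  have h0Y : (seq 0).Yv c = true := by
    have hcomp := ((seq 0).compat i).1 hpos
    rcases h0 with h | h <;>
      simp only [MZ.h, hpos, if_true] at h <;> split_ifs at h with h1 h2 <;>
        simp_all [hc]
  have hqY : (seq q).Yv c = false := by
    have h := hq
    simp only [MZ.h, hpos, if_true] at h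
    split_ifs at h with h1 h2 <;> simp_all [hc]
  obtain ⟨t, ht, hT, hF⟩ := exists_flip (fun t => (seq t).Yv c) q h0Y hqY
  refine ⟨t, ht, ?_⟩
  cases hstep t ht with
  | alphaStep i' hX hg hh hXupd hYeq =>
    rw [hYeq, hT] at hF; exact absurd hF (by simp)
  | betaStep i' hY hh htl hYupd hXeq =>
    have hic : i' = c := by
      by_contra hne
      rw [hYupd, Function.update_of_ne (fun hcc => hne hcc.symm), hT] at hF
      exact absurd hF (by simp)
    subst hic
    have hYF : (seq (t + 1)).Yv c = false := hF
    -- classification of non-edge same-component vertices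
    have hconn : ∀ v : Fin n ⊕ Fin p, Ψ.π (.inl v) = Ψ.π (.inl (.inl i)) →
        Conn Ψ.edge (.inl (.inl i)) (.inl v) := by
      intro v hv
      exact (Ψ.π_eq _ _).mp hv.symm
    have keyL : ∀ j : Fin n, Ψ.π (.inl (.inl j)) = Ψ.π (.inl (.inl i)) →
        ¬ Ψ.edge (.inl (.inl i)) (.inl (.inl j)) → sy j = true := by
      intro j hv hne
      by_contra hj
      have hj' : sy j = false := by simpa using hj
      exact hne ((Ψ.condX i j).mpr ⟨by simp [hpos, hj'], hconn _ hv⟩)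
    have keyR : ∀ l : Fin p, Ψ.π (.inl (.inr l)) = Ψ.π (.inl (.inl i)) →
        ¬ Ψ.edge (.inl (.inl i)) (.inl (.inr l)) → sz l = false := by
      intro l hv hne
      by_contra hl
      have hl' : sz l = true := by simpa using hl
      exact hne ((Ψ.condXY i l).mpr ⟨hpos.trans hl'.symm, hconn _ hv⟩)
    refine ⟨?_, ?_, ?_⟩
    · -- redex: all places of Ψ_{y_i} occupied by f
      rintro (j | l) hv hne
      · exact hh j (keyL j hv hne) hv
      · exact htl l (keyR l hv hne) hv
    · -- contractum: all places of Ψ_{y_i} occupied by 1_A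
      rintro (j | l) hv hne
      · have hsyj := keyL j hv hne
        have hff := hh j hsyj hv
        have hXf : (seq t).Xv (Φ.πR j) = false := by
          simp only [MZ.h, hsyj, if_true] at hff
          split_ifs at hff with h1 h2 <;> simp_all
        have hYj : (seq (t + 1)).Yv (Ψ.πL j) = false := by
          show (seq (t + 1)).Yv (Ψ.π (.inl (.inl j))) = false
          rw [hv]; exact hYF
        show (seq (t + 1)).h j = .idA
        simp [MZ.h, hsyj, hXeq, hXf, hYj]
      · have hszl := keyR l hv hne
        have hYl : (seq (t + 1)).Yv (Ψ.πR l) = false := by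
          show (seq (t + 1)).Yv (Ψ.π (.inl (.inr l))) = false
          rw [hv]; exact hYF
        show (seq (t + 1)).t l = .idA
        simp [MZ.t, hszl, hYl]
    · -- contractum: all places of Ψ'_{y_i} occupied by f
      rintro (j | l) hedge
      · obtain ⟨hsgn, hcn⟩ := (Ψ.condX i j).mp hedge
        have hsyj : sy j = false := by
          rw [hpos] at hsgn; cases hj : sy j <;> simp [hj] at hsgn ⊢
        have hv : Ψ.π (.inl (.inl j)) = Ψ.π (.inl (.inl i)) :=
          ((Ψ.π_eq _ _).mpr hcn).symm
        have hXt : (seq t).Xv (Φ.πR j) = true := by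
          have := ((seq t).compat j).2 hsyj
          have hYt : (seq t).Yv (Ψ.πL j) = true := by
            show (seq t).Yv (Ψ.π (.inl (.inl j))) = true
            rw [hv]; exact hT
          by_contra hx
          exact this ⟨hYt, by simpa using hx⟩
        show (seq (t + 1)).h j = .ff
        simp only [MZ.h, hsyj, if_false, Bool.false_eq_true]
        have hYj : (seq (t + 1)).Yv (Ψ.πL j) = false := by
          show (seq (t + 1)).Yv (Ψ.π (.inl (.inl j))) = false
          rw [hv]; exact hYF
        simp [hYj, hXeq, hXt]
      · obtain ⟨hsgn, hcn⟩ := (Ψ.condXY i l).mp hedge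
        have hszl : sz l = true := hpos ▸ hsgn.symm
        have hv : Ψ.π (.inl (.inr l)) = Ψ.π (.inl (.inl i)) :=
          ((Ψ.π_eq _ _).mpr hcn).symm
        show (seq (t + 1)).t l = .ff
        simp only [MZ.t, hszl, if_true]
        have hYl : (seq (t + 1)).Yv (Ψ.πR l) = false := by
          show (seq (t + 1)).Yv (Ψ.π (.inl (.inr l))) = false
          rw [hv]; exact hYF
        simp [hYl]

end GDin
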